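/- arXiv:math/0011110 — 4 statements merged into one kernel-verified Lean document; each statement's English description precedes it below -/
import Mathlib

section
/- Let R be a commutative ring, n ≥ 1, and α, β, γ, δ ∈ R. Suppose a_{i,j} ∈ R is given for 1 ≤ i ≤ n and 0 ≤ j ≤ n+1 and satisfies: δ·a_{i,j} = α·a_{i-1,j} + β·a_{i-1,j-1} + γ·a_{i,j-1} for all 2 ≤ i ≤ n and 1 ≤ j ≤ n+1; β·a_{i,0} + γ·a_{i+1,0} = 0 for all 1 ≤ i ≤ n-1; and δ·a_{i+1,n+1} − α·a_{i,n+1} = 0 for all 1 ≤ i ≤ n-1. Let A = (a_{i,j})_{1≤i,j≤n} and define sequences (α_e), (β_e), (γ_e), (δ_e) in R, each satisfying the second-order recurrence x_{e+1} = (β+δ)·x_e − (βδ+αγ)·x_{e-1}, with initial values δ_1 = δ, δ_2 = δ² − αγ; α_1 = α, α_2 = α(δ+β); β_1 = β, β_2 = β² − αγ; γ_1 = γ, γ_2 = γ(β+δ). Then for every e ≥ 1 the entries a^{(e)}_{i,j} of the matrix power A^e satisfy δ_e·a^{(e)}_{i,j} = α_e·a^{(e)}_{i-1,j} + β_e·a^{(e)}_{i-1,j-1}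 + γ_e·a^{(e)}_{i,j-1} for all 2 ≤ i, j ≤ n. -/
def Bext {R : Type*} [CommRing R] {n : ℕ} (A : Matrix (Fin n) (Fin n) R) (e i j : ℕ) : R :=
  if h : 1 ≤ i ∧ i ≤ n ∧ 1 ≤ j ∧ j ≤ n then (A ^ e) ⟨i - 1, by omega⟩ ⟨j - 1, by omega⟩ else 0

lemma Bext_eq {R : Type*} [CommRing R] {n : ℕ} (A : Matrix (Fin n) (Fin n) R) (e : ℕ)
    {i j : ℕ} (h1 : 1 ≤ i) (h2 : i ≤ n) (h3 : 1 ≤ j) (h4 : j ≤ n) :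
    Bext A e i j = (A ^ e) ⟨i - 1, by omega⟩ ⟨j - 1, by omega⟩ :=
  dif_pos ⟨h1, h2, h3, h4⟩

lemma Bext_zero {R : Type*} [CommRing R] {n : ℕ} (A : Matrix (Fin n) (Fin n) R) (e i j : ℕ)
    (h : ¬(1 ≤ i ∧ i ≤ n ∧ 1 ≤ j ∧ j ≤ n)) : Bext A e i j = 0 :=
  dif_neg h

lemma Bext_succ {R : Type*} [CommRing R] {n : ℕ} (A : Matrix (Fin n) (Fin n) R) (e i j : ℕ) :
    Bext A (e + 1) i j = ∑ m ∈ Finset.range n, Bext A e i (m + 1) * Bext A 1 (m + 1) j := by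
  by_cases hi : 1 ≤ i ∧ i ≤ n
  · by_cases hj : 1 ≤ j ∧ j ≤ n
    · rw [Bext_eq A (e+1) hi.1 hi.2 hj.1 hj.2, pow_succ, Matrix.mul_apply,
        ← Fin.sum_univ_eq_sum_range (fun m => Bext A e i (m + 1) * Bext A 1 (m + 1) j) n]
      refine Finset.sum_congr rfl fun k _ => ?_
      rw [Bext_eq A e hi.1 hi.2 (Nat.le_add_left 1 k) (by omega),
        Bext_eq A 1 (Nat.le_add_left 1 k) (by omega) hj.1 hj.2, pow_one]
      simp [Fin.eta]
    · rw [Bext_zero A (e+1) i j (by tauto)]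
      exact (Finset.sum_eq_zero fun m _ => by
        rw [Bext_zero A 1 (m+1) j (by tauto), mul_zero]).symm
  · rw [Bext_zero A (e+1) i j (by tauto)]
    exact (Finset.sum_eq_zero fun m _ => by
      rw [Bext_zero A e i (m+1) (by tauto), zero_mul]).symm

lemma sum_shift {R : Type*} [AddCommGroup R] (f : ℕ → R) (n : ℕ)
    (h0 : f 0 = 0) (hn : f n = 0) :
    ∑ m ∈ Finset.range n, f (m + 1) = ∑ m ∈ Finset.range n, f m := by
  have h1 := Finset.sum_range_succ' f n
  have h2 := Finset.sum_range_succ f n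
  rw [h0, add_zero] at h1
  rw [hn, add_zero] at h2
  rw [← h1, h2]

/-- **Netted binomial matrices, main theorem.**
If the entries of a tableau `a` satisfy the third-order recurrence
`δ a_{i,j} = α a_{i-1,j} + β a_{i-1,j-1} + γ a_{i,j-1}` together with the boundary
conditions, then the entries of every power of the associated `n × n` matrix satisfy
an analogous recurrence whose coefficients all satisfy the second-order recurrence
`x_{e+1} = (β+δ) x_e - (βδ+αγ) x_{e-1}`. (Entries are indexed 1-based; the matrix
index `⟨i-1, _⟩` corresponds to the 1-based row `i`.) -/
theorem netted_matrix_power {R : Type*} [CommRing R] {n : ℕ} (hn : 1 ≤ n)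
    (α β γ δ : R) (a : ℕ → ℕ → R)
    (hrec : ∀ i j : ℕ, 2 ≤ i → i ≤ n → 1 ≤ j → j ≤ n + 1 →
      δ * a i j = α * a (i - 1) j + β * a (i - 1) (j - 1) + γ * a i (j - 1))
    (hbound1 : ∀ i : ℕ, 1 ≤ i → i ≤ n - 1 → β * a i 0 + γ * a (i + 1) 0 = 0)
    (hbound2 : ∀ i : ℕ, 1 ≤ i → i ≤ n - 1 →
      δ * a (i + 1) (n + 1) - α * a i (n + 1) = 0)
    (A : Matrix (Fin n) (Fin n) R)
    (hA : ∀ i j : Fin n, A i j = a (i.val + 1) (j.val + 1))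
    (αs βs γs δs : ℕ → R)
    (hδ1 : δs 1 = δ) (hδ2 : δs 2 = δ ^ 2 - α * γ)
    (hα1 : αs 1 = α) (hα2 : αs 2 = α * (δ + β))
    (hβ1 : βs 1 = β) (hβ2 : βs 2 = β ^ 2 - α * γ)
    (hγ1 : γs 1 = γ) (hγ2 : γs 2 = γ * (β + δ))
    (hαrec : ∀ e : ℕ, 1 ≤ e → αs (e + 2) = (β + δ) * αs (e + 1) - (β * δ + α * γ) * αs e)
    (hβrec : ∀ e : ℕ, 1 ≤ e → βs (e + 2) = (β + δ) * βs (e + 1) - (β * δ + α * γ) * βs e)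
    (hγrec : ∀ e : ℕ, 1 ≤ e → γs (e + 2) = (β + δ) * γs (e + 1) - (β * δ + α * γ) * γs e)
    (hδrec : ∀ e : ℕ, 1 ≤ e → δs (e + 2) = (β + δ) * δs (e + 1) - (β * δ + α * γ) * δs e) :
    ∀ e : ℕ, 1 ≤ e → ∀ i j : ℕ, ∀ (hi2 : 2 ≤ i) (hin : i ≤ n) (hj2 : 2 ≤ j) (hjn : j ≤ n),
      δs e * (A ^ e) ⟨i - 1, by omega⟩ ⟨j - 1, by omega⟩ =
        αs e * (A ^ e) ⟨i - 2, by omega⟩ ⟨j - 1, by omega⟩ +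
        βs e * (A ^ e) ⟨i - 2, by omega⟩ ⟨j - 2, by omega⟩ +
        γs e * (A ^ e) ⟨i - 1, by omega⟩ ⟨j - 2, by omega⟩ := by
  -- The zero-extended entries of `A ^ 1` agree with `a` inside the board.
  have hB1 : ∀ i j : ℕ, 1 ≤ i → i ≤ n → 1 ≤ j → j ≤ n → Bext A 1 i j = a i j := by
    intro i j h1 h2 h3 h4
    rw [Bext_eq A 1 h1 h2 h3 h4, pow_one, hA]
    show a (i - 1 + 1) (j - 1 + 1) = a i j
    congr 1 <;> omega
  -- Base invariant (case e = 1).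
  have base : ∀ i : ℕ, 2 ≤ i → i ≤ n → ∀ j : ℕ,
      δ * Bext A 1 i (j + 1) - α * Bext A 1 (i - 1) (j + 1) =
      γ * Bext A 1 i j + β * Bext A 1 (i - 1) j := by
    intro i h2 hin j
    rcases Nat.eq_zero_or_pos j with hj0 | hj1
    · subst hj0
      rw [Bext_zero A 1 i 0 (by omega), Bext_zero A 1 (i-1) 0 (by omega),
        hB1 i 1 (by omega) hin (by omega) hn, hB1 (i-1) 1 (by omega) (by omega) (by omega) hn]
      have hr := hrec i 1 h2 hin (by omega) (by omega)
      have hb := hbound1 (i-1) (by omega) (by omega)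
      rw [Nat.sub_add_cancel (by omega)] at hb
      simp only [Nat.sub_self] at hr
      linear_combination hr + hb
    · rcases Nat.lt_or_ge j n with hjn | hjn
      · -- 1 ≤ j ≤ n - 1 : interior
        rw [hB1 i (j+1) (by omega) hin (by omega) (by omega),
          hB1 (i-1) (j+1) (by omega) (by omega) (by omega) (by omega),
          hB1 i j (by omega) hin hj1 (by omega),
          hB1 (i-1) j (by omega) (by omega) hj1 (by omega)]
        have hr := hrec i (j+1) h2 hin (by omega) (by omega)
        simp only [Nat.add_sub_cancel] at hr
        linear_combination hr
      · rcases Nat.eq_or_lt_of_le hjn with hjn' | hjn'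
        · -- j = n
          subst hjn'
          rw [Bext_zero A 1 i (n+1) (by omega), Bext_zero A 1 (i-1) (n+1) (by omega),
            hB1 i n (by omega) hin hj1 (by omega),
            hB1 (i-1) n (by omega) (by omega) hj1 (by omega)]
          have hr := hrec i (n+1) h2 hin (by omega) (by omega)
          simp only [Nat.add_sub_cancel] at hr
          have hb := hbound2 (i-1) (by omega) (by omega)
          rw [Nat.sub_add_cancel (by omega)] at hb
          linear_combination hr - hb
        · -- j ≥ n + 1
          rw [Bext_zero A 1 i (j+1) (by omega), Bext_zero A 1 (i-1) (j+1) (by omega),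
            Bext_zero A 1 i j (by omega), Bext_zero A 1 (i-1) j (by omega)]
          ring
  -- Coefficient identities: (δs, αs, γs, βs) at e+1 from level e.
  have C : ∀ e : ℕ, 1 ≤ e →
      δs (e+1) = δ * δs e - α * γs e ∧ αs (e+1) = δ * αs e + α * βs e ∧
      γs (e+1) = γ * δs e + β * γs e ∧ βs (e+1) = β * βs e - γ * αs e := by
    intro e he
    induction e, he using Nat.le_induction with
    | base =>
      refine ⟨?_, ?_, ?_, ?_⟩
      · rw [show (1:ℕ)+1 = 2 from rfl, hδ2, hδ1, hγ1]; ring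
      · rw [show (1:ℕ)+1 = 2 from rfl, hα2, hα1, hβ1]; ring
      · rw [show (1:ℕ)+1 = 2 from rfl, hγ2, hδ1, hγ1]; ring
      · rw [show (1:ℕ)+1 = 2 from rfl, hβ2, hβ1, hα1]; ring
    | succ e he ih =>
      obtain ⟨c1, c2, c3, c4⟩ := ih
      refine ⟨?_, ?_, ?_, ?_⟩
      · linear_combination hδrec e he + β * c1 + α * c3
      · linear_combination hαrec e he + β * c2 - α * c4
      · linear_combination hγrec e he - γ * c1 + δ * c3
      · linear_combination hβrec e he + δ * c4 + γ * c2
  -- Main invariant, by induction on e.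
  have INV : ∀ e : ℕ, 1 ≤ e → ∀ i : ℕ, 2 ≤ i → i ≤ n → ∀ j : ℕ,
      δs e * Bext A e i (j + 1) - αs e * Bext A e (i - 1) (j + 1) =
      γs e * Bext A e i j + βs e * Bext A e (i - 1) j := by
    intro e he
    induction e, he using Nat.le_induction with
    | base =>
      intro i h2 hin j
      rw [hδ1, hα1, hβ1, hγ1]
      exact base i h2 hin j
    | succ e he ih =>
      intro i h2 hin j
      obtain ⟨c1, c2, c3, c4⟩ := C e he
      have hq : ∀ m : ℕ,
          γs e * Bext A e i m + βs e * Bext A e (i-1) m =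
          δs e * Bext A e i (m+1) - αs e * Bext A e (i-1) (m+1) :=
        fun m => (ih i h2 hin m).symm
      have hp1 : δs e * Bext A e i 1 - αs e * Bext A e (i-1) 1 = 0 := by
        have h0 := hq 0
        rw [Bext_zero A e i 0 (by omega), Bext_zero A e (i-1) 0 (by omega)] at h0
        linear_combination -h0
      have main :
          δs (e+1) * Bext A (e+1) i (j+1) - αs (e+1) * Bext A (e+1) (i-1) (j+1) -
            (γs (e+1) * Bext A (e+1) i j + βs (e+1) * Bext A (e+1) (i-1) j) = 0 := by
        rw [Bext_succ A e i (j+1), Bext_succ A e (i-1) (j+1), Bext_succ A e i j,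
          Bext_succ A e (i-1) j, Finset.mul_sum, Finset.mul_sum, Finset.mul_sum,
          Finset.mul_sum, ← Finset.sum_sub_distrib, ← Finset.sum_add_distrib,
          ← Finset.sum_sub_distrib]
        have e1 :
            ∑ m ∈ Finset.range n,
              (δs (e+1) * (Bext A e i (m+1) * Bext A 1 (m+1) (j+1)) -
                αs (e+1) * (Bext A e (i-1) (m+1) * Bext A 1 (m+1) (j+1)) -
                (γs (e+1) * (Bext A e i (m+1) * Bext A 1 (m+1) j) +
                  βs (e+1) * (Bext A e (i-1) (m+1) * Bext A 1 (m+1) j))) =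
            ∑ m ∈ Finset.range n,
              ((δs e * Bext A e i (m+1) - αs e * Bext A e (i-1) (m+1)) *
                  (δ * Bext A 1 (m+1) (j+1) - γ * Bext A 1 (m+1) j) -
                (δs e * Bext A e i (m+1+1) - αs e * Bext A e (i-1) (m+1+1)) *
                  (α * Bext A 1 (m+1) (j+1) + β * Bext A 1 (m+1) j)) := by
          refine Finset.sum_congr rfl fun m _ => ?_
          rw [c1, c2, c3, c4]
          linear_combination (-(α * Bext A 1 (m+1) (j+1) + β * Bext A 1 (m+1) j)) * hq (m+1)
        rw [e1, Finset.sum_sub_distrib]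
        have e2 : ∑ m ∈ Finset.range n,
              (δs e * Bext A e i (m+1+1) - αs e * Bext A e (i-1) (m+1+1)) *
                (α * Bext A 1 (m+1) (j+1) + β * Bext A 1 (m+1) j) =
            ∑ m ∈ Finset.range n,
              (δs e * Bext A e i (m+1) - αs e * Bext A e (i-1) (m+1)) *
                (α * Bext A 1 m (j+1) + β * Bext A 1 m j) := by
          refine sum_shift (fun m =>
            (δs e * Bext A e i (m+1) - αs e * Bext A e (i-1) (m+1)) *
              (α * Bext A 1 m (j+1) + β * Bext A 1 m j)) n ?_ ?_
          · simp only [Bext_zero A 1 0 (j+1) (by omega), Bext_zero A 1 0 j (by omega)]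
            ring
          · simp only [Bext_zero A e i (n+1) (by omega), Bext_zero A e (i-1) (n+1) (by omega)]
            ring
        rw [e2, ← Finset.sum_sub_distrib]
        refine Finset.sum_eq_zero fun m hm => ?_
        have hmn : m < n := Finset.mem_range.mp hm
        rcases Nat.eq_zero_or_pos m with hm0 | hm1
        · subst hm0
          rw [Bext_zero A 1 0 (j+1) (by omega), Bext_zero A 1 0 j (by omega)]
          simp only [zero_add]
          rw [hp1]
          ring
        · have hb := base (m+1) (by omega) (by omega) j
          simp only [Nat.add_sub_cancel] at hb
          linear_combination (δs e * Bext A e i (m+1) - αs e * Bext A e (i-1) (m+1)) * hb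
      linear_combination main
  -- Conclude.
  intro e he i j hi2 hin hj2 hjn
  have h := INV e he i hi2 hin (j - 1)
  rw [show j - 1 + 1 = j from by omega] at h
  rw [Bext_eq A e (by omega : 1 ≤ i) hin (by omega : 1 ≤ j) hjn,
    Bext_eq A e (by omega : 1 ≤ i - 1) (by omega) (by omega : 1 ≤ j) hjn,
    Bext_eq A e (by omega : 1 ≤ i) hin (by omega : 1 ≤ j - 1) (by omega),
    Bext_eq A e (by omega : 1 ≤ i - 1) (by omega) (by omega : 1 ≤ j - 1) (by omega)] at h
  simp only [show i - 1 - 1 = i - 2 from by omega, show j - 1 - 1 = j - 2 from by omega] at h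
  linear_combination h
end

section
/- Let n ≥ 1 and let T_n be the Pell matrix of dimension n. Let v ∈ ℤ^n be the vector with j-th coordinate v_j = (-1)^{n+1-j}·P_{n-j} for 1 ≤ j ≤ n, i.e. v = ((-1)^n P_{n-1}, (-1)^{n-1} P_{n-2}, …, −P_0)^t. Then for every e ≥ 0 and every 1 ≤ i ≤ n, the i-th coordinate of T_n^{e+1}·v equals P_{(n-1)e + i - 1}; that is, T_n^{e+1}·v = (P_{(n-1)e}, P_{(n-1)e+1}, …, P_{(n-1)(e+1)})^t. -/
/-- The Pell sequence `P_0 = 0`, `P_1 = 1`, `P_{e+1} = 2 P_e + P_{e-1}`. -/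
def pell : ℕ → ℤ
  | 0 => 0
  | 1 => 1
  | e + 2 => 2 * pell (e + 1) + pell e

/-- The `n × n` Pell matrix, with 1-based `(i,j)` entry `2^{i+j-n-1} C(i-1, n-j)`
when `i + j ≥ n + 1` and `0` otherwise. -/
def pellMatrix (n : ℕ) : Matrix (Fin n) (Fin n) ℤ :=
  Matrix.of fun i j =>
    if n ≤ i.val + j.val + 1 then
      2 ^ (i.val + j.val + 1 - n) * (Nat.choose i.val (n - 1 - j.val) : ℤ)
    else 0

/-- Pell numbers extended to integer indices. -/
def pellZ (m : ℤ) : ℤ :=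
  if 0 ≤ m then pell m.toNat else (-1) ^ (m.natAbs + 1) * pell m.natAbs

lemma pellZ_natCast (k : ℕ) : pellZ (k : ℤ) = pell k := by
  simp [pellZ]

lemma pellZ_neg_natCast (k : ℕ) : pellZ (-(k : ℤ)) = (-1) ^ (k + 1) * pell k := by
  cases k with
  | zero => simp [pellZ, pell]
  | succ j =>
    have h : ¬ (0 ≤ -((j + 1 : ℕ) : ℤ)) := by omega
    rw [pellZ, if_neg h]
    have : (-((j + 1 : ℕ) : ℤ)).natAbs = j + 1 := by
      rw [Int.natAbs_neg]; exact Int.natAbs_natCast _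
    rw [this]

lemma pellZ_rec (m : ℤ) : pellZ (m + 2) = 2 * pellZ (m + 1) + pellZ m := by
  rcases m with k | k
  · have h0 : ((k : ℕ) : ℤ) + 2 = ((k + 2 : ℕ) : ℤ) := by push_cast; ring
    have h1 : ((k : ℕ) : ℤ) + 1 = ((k + 1 : ℕ) : ℤ) := by push_cast; ring
    rw [show (Int.ofNat k) = ((k : ℕ) : ℤ) from rfl, h0, h1, pellZ_natCast,
      pellZ_natCast, pellZ_natCast]
    rfl
  · match k with
    | 0 =>
      show pellZ 1 = 2 * pellZ 0 + pellZ (-1)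
      have h1 : pellZ (-1) = (-1) ^ (1 + 1) * pell 1 := by exact_mod_cast pellZ_neg_natCast 1
      have h2 : pellZ 1 = pell 1 := by exact_mod_cast pellZ_natCast 1
      have h3 : pellZ 0 = pell 0 := by exact_mod_cast pellZ_natCast 0
      rw [h1, h2, h3]
      show pell 1 = 2 * pell 0 + (-1) ^ (1+1) * pell 1
      simp [pell]
    | 1 =>
      show pellZ 0 = 2 * pellZ (-1) + pellZ (-2)
      have h1 : pellZ (-1) = (-1) ^ (1 + 1) * pell 1 := by exact_mod_cast pellZ_neg_natCast 1
      have h2 : pellZ (-2) = (-1) ^ (2 + 1) * pell 2 := by exact_mod_cast pellZ_neg_natCast 2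
      have h0 : pellZ 0 = pell 0 := by exact_mod_cast pellZ_natCast 0
      rw [h0, h1, h2]
      show pell 0 = 2 * ((-1) ^ (1+1) * pell 1) + (-1) ^ (2+1) * pell 2
      simp [pell]
    | (j + 2) =>
      show pellZ (Int.negSucc (j+2) + 2) = 2 * pellZ (Int.negSucc (j+2) + 1) + pellZ (Int.negSucc (j+2))
      have e1 : Int.negSucc (j+2) + 2 = -((j+1 : ℕ) : ℤ) := by
        rw [Int.negSucc_eq]; push_cast; ring
      have e2 : Int.negSucc (j+2) + 1 = -((j+2 : ℕ) : ℤ) := by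
        rw [Int.negSucc_eq]; push_cast; ring
      have e3 : Int.negSucc (j+2) = -((j+3 : ℕ) : ℤ) := by
        rw [Int.negSucc_eq]; push_cast; ring
      rw [e1, e2, e3, pellZ_neg_natCast, pellZ_neg_natCast, pellZ_neg_natCast]
      have hp : pell (j + 3) = 2 * pell (j + 2) + pell (j + 1) := rfl
      rw [hp]
      ring

/-- The key binomial identity for the extended Pell numbers. -/
lemma pellZ_add_nat (i : ℕ) : ∀ s : ℤ,
    pellZ (s + i) = ∑ k ∈ Finset.range (i + 1),
      (Nat.choose i k : ℤ) * 2 ^ (i - k) * pellZ (s - k) := by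
  induction i with
  | zero => intro s; simp
  | succ i ih =>
    intro s
    have hrec : pellZ (s + (i + 1 : ℕ)) = 2 * pellZ (s + i) + pellZ ((s - 1) + i) := by
      have : s + ((i : ℤ) + 1) = (s + i - 1) + 2 := by ring
      push_cast
      rw [this, pellZ_rec]
      congr 2
      · ring
      · ring
    rw [hrec, ih s, ih (s - 1)]
    -- RHS: peel off the k = 0 term via sum_range_succ'
    rw [Finset.sum_range_succ' (fun k => (Nat.choose (i+1) k : ℤ) * 2 ^ (i + 1 - k) * pellZ (s - k))]
    simp only [Nat.choose_succ_succ, Nat.choose_zero_right, Nat.cast_one, one_mul,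
      Nat.cast_add, Nat.sub_zero, Nat.cast_ofNat]
    have split : ∀ k ∈ Finset.range (i + 1),
        ((Nat.choose i k : ℤ) + (Nat.choose i (k+1) : ℤ)) * 2 ^ (i + 1 - (k+1)) * pellZ (s - ((k : ℤ)+1))
        = (Nat.choose i k : ℤ) * 2 ^ (i - k) * pellZ ((s - 1) - k)
          + (Nat.choose i (k+1) : ℤ) * 2 ^ (i - (k+1) + 1) * pellZ (s - ((k:ℤ)+1)) := by
      intro k hk
      rw [Finset.mem_range] at hk
      have h1 : i + 1 - (k + 1) = i - k := by omega
      have h2 : s - 1 - k = s - ((k : ℤ) + 1) := by ring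
      rcases Nat.lt_or_ge k i with h | h
      · have h3 : i - (k + 1) + 1 = i - k := by omega
        rw [h1, h2, h3]; ring
      · have hki : k = i := by omega
        subst hki
        simp [h1, h2]
    rw [Finset.sum_congr rfl split, Finset.sum_add_distrib]
    have key : 2 * ∑ k ∈ Finset.range (i+1), (i.choose k : ℤ) * 2 ^ (i - k) * pellZ (s - k)
        = (∑ x ∈ Finset.range (i+1), (i.choose (x+1) : ℤ) * 2 ^ (i - (x+1) + 1) * pellZ (s - ((x : ℤ) + 1)))
          + 2 ^ (i+1) * pellZ (s - ((0 : ℕ) : ℤ)) := by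
      rw [Finset.mul_sum,
        Finset.sum_range_succ' (fun k => 2 * ((i.choose k : ℤ) * 2 ^ (i - k) * pellZ (s - k)))]
      congr 1
      · rw [Finset.sum_range_succ]
        have hBi : ((i.choose (i+1) : ℤ)) * 2 ^ (i - (i+1) + 1) * pellZ (s - ((i : ℤ) + 1)) = 0 := by
          simp [Nat.choose_succ_self]
        rw [hBi, add_zero]
        apply Finset.sum_congr rfl
        intro k hk
        rw [Finset.mem_range] at hk
        have hpow : (2 : ℤ) ^ (i - (k+1) + 1) = 2 * 2 ^ (i - (k+1)) := by
          rw [pow_succ]; ring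
        push_cast
        rw [hpow]
        ring
      · have : i - 0 = i := rfl
        rw [this, Nat.choose_zero_right, pow_succ]
        ring
    rw [key]
    ring

lemma pellMatrix_step (n : ℕ) (hn : 1 ≤ n) (w : Fin n → ℤ) (m : ℤ)
    (hw : ∀ j : Fin n, w j = pellZ (m + j.val)) (i : Fin n) :
    (pellMatrix n).mulVec w i = pellZ (m + ((n - 1 : ℕ) : ℤ) + i.val) := by
  have hi : i.val < n := i.isLt
  set f : ℕ → ℤ := fun j =>
    (if n ≤ i.val + j + 1 then
      2 ^ (i.val + j + 1 - n) * (Nat.choose i.val (n - 1 - j) : ℤ) else 0) * pellZ (m + j)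
    with hf
  have h1 : (pellMatrix n).mulVec w i = ∑ j ∈ Finset.range n, f j := by
    rw [Matrix.mulVec, dotProduct, ← Fin.sum_univ_eq_sum_range f n]
    apply Finset.sum_congr rfl
    intro j _
    rw [hw j]
    simp only [pellMatrix, Matrix.of_apply, hf]
  rw [h1, ← Finset.sum_range_reflect f n]
  have h2 : ∑ j ∈ Finset.range n, f (n - 1 - j)
      = ∑ k ∈ Finset.range (i.val + 1),
          (Nat.choose i.val k : ℤ) * 2 ^ (i.val - k) * pellZ ((m + ((n-1:ℕ) : ℤ)) - k) := by
    rw [← Finset.sum_subset (Finset.range_subset_range.2 (by omega : i.val + 1 ≤ n))]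
    · apply Finset.sum_congr rfl
      intro k hk
      rw [Finset.mem_range] at hk
      have hk' : k ≤ i.val := by omega
      have hcond : n ≤ i.val + (n - 1 - k) + 1 := by omega
      have hexp : i.val + (n - 1 - k) + 1 - n = i.val - k := by omega
      have harg : n - 1 - (n - 1 - k) = k := by omega
      have hcast : (m : ℤ) + ((n - 1 - k : ℕ) : ℤ) = (m + ((n-1:ℕ) : ℤ)) - k := by
        have : ((n - 1 - k : ℕ) : ℤ) = ((n-1 : ℕ) : ℤ) - (k : ℤ) := by
          have := Nat.cast_sub (by omega : k ≤ n - 1) (R := ℤ)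
          rw [this]
        rw [this]; ring
      rw [hf]
      simp only [if_pos hcond, hexp, harg, hcast]
      ring
    · intro k hk hk'
      rw [Finset.mem_range] at hk hk'
      have hcond : ¬ (n ≤ i.val + (n - 1 - k) + 1) := by omega
      rw [hf]
      simp only [if_neg hcond, zero_mul]
  rw [h2, ← pellZ_add_nat i.val (m + ((n-1:ℕ) : ℤ))]

/-- With `v = ((-1)^n P_{n-1}, (-1)^{n-1} P_{n-2}, …, -P_0)ᵗ`, the `i`-th coordinate
(1-based) of `T_n^{e+1} ⬝ v` is `P_{(n-1)e + i - 1}`. -/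
theorem pellMatrix_pow_mulVec (n : ℕ) (hn : 1 ≤ n)
    (v : Fin n → ℤ) (hv : ∀ j : Fin n, v j = (-1) ^ (n - j.val) * pell (n - 1 - j.val)) :
    ∀ e : ℕ, ∀ i : Fin n,
      ((pellMatrix n) ^ (e + 1)).mulVec v i = pell ((n - 1) * e + i.val) := by
  intro e
  induction e with
  | zero =>
    intro i
    rw [pow_one]
    have hw : ∀ j : Fin n, v j = pellZ ((-((n-1 : ℕ) : ℤ)) + j.val) := by
      intro j
      have hj : j.val ≤ n - 1 := by omega
      have hc : (-((n-1:ℕ) : ℤ)) + j.val = -((n - 1 - j.val : ℕ) : ℤ) := by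
        rw [Nat.cast_sub hj]; ring
      rw [hv j, hc, pellZ_neg_natCast, show n - 1 - j.val + 1 = n - j.val from by omega]
    rw [pellMatrix_step n hn v _ hw i]
    have : (-((n-1:ℕ) : ℤ)) + ((n-1:ℕ) : ℤ) + (i.val : ℤ) = ((i.val : ℕ) : ℤ) := by ring
    rw [this, pellZ_natCast]
    congr 1
    omega
  | succ e ih =>
    intro i
    rw [pow_succ', ← Matrix.mulVec_mulVec]
    have hw : ∀ j : Fin n, (pellMatrix n ^ (e + 1)).mulVec v j
        = pellZ ((((n-1) * e : ℕ) : ℤ) + j.val) := by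
      intro j
      rw [ih j]
      rw [show (((n-1) * e : ℕ) : ℤ) + (j.val : ℤ) = (((n-1) * e + j.val : ℕ) : ℤ) by push_cast; ring,
        pellZ_natCast]
    rw [pellMatrix_step n hn _ _ hw i]
    rw [show (((n-1) * e : ℕ) : ℤ) + ((n-1 : ℕ) : ℤ) + (i.val : ℤ)
        = (((n-1) * (e + 1) + i.val : ℕ) : ℤ) by push_cast; ring, pellZ_natCast]
end

section
/- Let R be a commutative ring, m ∈ R, and n ≥ 1. Let S be the n×n matrix over R whose (i,j) entry is (-1)^{n+i+j+1}·m^{n+1-i-j}·C(n-i, j-1) when i+j ≤ n+1, and 0 otherwise (the binomial coefficient C(n-i, j-1) vanishes exactly when i+j > n+1). Then S·T_n(m) = I_n and T_n(m)·S = I_n; that is, T_n(m) is invertible with inverse T_n(m)^{-1} = S. -/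
lemma neg_one_pow_mod {R : Type*} [CommRing R] (p q : ℕ) (h : p % 2 = q % 2) :
    (-1 : R) ^ p = (-1) ^ q := by
  conv_lhs => rw [← Nat.div_add_mod p 2]
  conv_rhs => rw [← Nat.div_add_mod q 2]
  rw [h, pow_add, pow_add, pow_mul, pow_mul]
  norm_num

lemma alt_sum_key {R : Type*} [CommRing R] (a b : ℕ) :
    ∑ k ∈ Finset.Icc b a, (-1 : R) ^ k * (a.choose k : R) * (k.choose b : R) =
      if a = b then (-1 : R) ^ a else 0 := by
  rcases lt_or_ge a b with h | h
  · rw [Finset.Icc_eq_empty (by omega), Finset.sum_empty, if_neg (by omega)]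
  · rw [show Finset.Icc b a = Finset.Ico b (a + 1) by rw [Finset.Ico_add_one_right_eq_Icc],
      Finset.sum_Ico_eq_sum_range]
    have hsum : ∀ k ∈ Finset.range (a + 1 - b),
        (-1 : R) ^ (b + k) * (a.choose (b + k) : R) * ((b + k).choose b : R) =
        ((-1 : R) ^ b * (a.choose b : R)) * ((-1 : R) ^ k * ((a - b).choose k : R)) := by
      intro k hk
      simp only [Finset.mem_range] at hk
      have h1 : (a.choose (b + k)) * ((b + k).choose b) =
          a.choose b * (a - b).choose k := by
        have := Nat.choose_mul (n := a) (k := b + k) (s := b) (by omega)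
        simpa using this
      calc (-1 : R) ^ (b + k) * (a.choose (b + k) : R) * ((b + k).choose b : R)
          = (-1 : R) ^ b * (-1 : R) ^ k *
            ((a.choose (b + k) * (b + k).choose b : ℕ) : R) := by
            push_cast [pow_add]; ring
        _ = (-1 : R) ^ b * (-1 : R) ^ k *
            ((a.choose b * (a - b).choose k : ℕ) : R) := by rw [h1]
        _ = ((-1 : R) ^ b * (a.choose b : R)) *
            ((-1 : R) ^ k * ((a - b).choose k : R)) := by push_cast; ring
    rw [Finset.sum_congr rfl hsum, ← Finset.mul_sum]
    have h3 : a + 1 - b = (a - b) + 1 := by omega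
    rw [h3]
    have h4 : ∑ k ∈ Finset.range ((a - b) + 1), (-1 : R) ^ k * ((a - b).choose k : R) =
        if a - b = 0 then 1 else 0 := by
      have := Int.alternating_sum_range_choose (n := a - b)
      have := congrArg (fun z : ℤ => (z : R)) this
      push_cast at this
      simpa using this
    rw [h4]
    rcases eq_or_lt_of_le h with rfl | hlt
    · simp
    · rw [if_neg (by omega), if_neg (by omega), mul_zero]



/-- The generalized Fibonacci sequence with parameter `m`:
`U_0 = 0`, `U_1 = 1`, `U_{e+1} = m U_e + U_{e-1}`. -/
def genFibU {R : Type*} [CommRing R] (m : R) : ℕ → R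
  | 0 => 0
  | 1 => 1
  | e + 2 => m * genFibU m (e + 1) + genFibU m e

/-- The `n × n` generalized Fibonacci matrix `T_n(m)`, with 1-based `(i,j)` entry
`m^{i+j-n-1} C(i-1, n-j)` when `i + j ≥ n + 1` and `0` otherwise. -/
def genFibMatrix {R : Type*} [CommRing R] (m : R) (n : ℕ) :
    Matrix (Fin n) (Fin n) R :=
  Matrix.of fun i j =>
    if n ≤ i.val + j.val + 1 then
      m ^ (i.val + j.val + 1 - n) * (Nat.choose i.val (n - 1 - j.val) : R)
    else 0

/-- The candidate inverse of `T_n(m)`: 1-based `(i,j)` entry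
`(-1)^{n+i+j+1} m^{n+1-i-j} C(n-i, j-1)` when `i + j ≤ n + 1`, and `0` otherwise. -/
def genFibMatrixInv {R : Type*} [CommRing R] (m : R) (n : ℕ) :
    Matrix (Fin n) (Fin n) R :=
  Matrix.of fun i j =>
    if i.val + j.val + 1 ≤ n then
      (-1 : R) ^ (n + i.val + j.val + 3) * m ^ (n - 1 - i.val - j.val) *
        (Nat.choose (n - 1 - i.val) j.val : R)
    else 0

/-- `T_n(m)` is invertible, with inverse the matrix `genFibMatrixInv m n`. -/
theorem genFibMatrix_inverse {R : Type*} [CommRing R] (m : R) (n : ℕ) (hn : 1 ≤ n) :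
    genFibMatrixInv m n * genFibMatrix m n = 1 ∧
      genFibMatrix m n * genFibMatrixInv m n = 1 := by
  have hST : genFibMatrixInv m n * genFibMatrix m n = 1 := by
    ext i j
    have hi : i.val ≤ n - 1 := by omega
    have hj : j.val ≤ n - 1 := by omega
    set a := n - 1 - i.val with ha
    set b := n - 1 - j.val with hb
    clear_value a b
    rw [Matrix.mul_apply]
    simp only [genFibMatrix, genFibMatrixInv, Matrix.of_apply]
    have hterm : ∀ k : Fin n,
        (if i.val + k.val + 1 ≤ n then
          (-1 : R) ^ (n + i.val + k.val + 3) * m ^ (n - 1 - i.val - k.val) *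
            (Nat.choose (n - 1 - i.val) k.val : R) else 0) *
        (if n ≤ k.val + j.val + 1 then
          m ^ (k.val + j.val + 1 - n) * (Nat.choose k.val (n - 1 - j.val) : R) else 0) =
        (if b ≤ k.val ∧ k.val ≤ a then
          ((-1 : R) ^ a * m ^ (a - b)) *
            ((-1 : R) ^ k.val * (a.choose k.val : R) * (k.val.choose b : R)) else 0) := by
      intro k
      have hkn := k.isLt
      have hin := i.isLt
      have hjn := j.isLt
      by_cases h1 : i.val + k.val + 1 ≤ n
      · by_cases h2 : n ≤ k.val + j.val + 1
        · rw [if_pos h1, if_pos h2, if_pos ⟨by omega, by omega⟩]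
          have hk1 : k.val ≤ a := by omega
          have hk2 : b ≤ k.val := by omega
          have hsign : (-1 : R) ^ (n + i.val + k.val + 3) = (-1 : R) ^ (a + k.val) :=
            neg_one_pow_mod _ _ (by omega)
          have hpow : m ^ (a - k.val) * m ^ (k.val + j.val + 1 - n) =
              m ^ (a - b) := by
            rw [← pow_add]; congr 1; omega
          rw [hsign, show n - 1 - i.val = a from ha.symm,
            show n - 1 - j.val = b from hb.symm]
          calc (-1 : R) ^ (a + k.val) * m ^ (a - k.val) * (a.choose k.val : R) *
                (m ^ (k.val + j.val + 1 - n) * (k.val.choose b : R))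
              = (-1 : R) ^ (a + k.val) *
                (m ^ (a - k.val) * m ^ (k.val + j.val + 1 - n)) *
                (a.choose k.val : R) * (k.val.choose b : R) := by ring
            _ = _ := by rw [hpow, pow_add]; ring
        · have hc : ¬ (b ≤ k.val ∧ k.val ≤ a) := by omega
          rw [if_neg h2, if_neg hc, mul_zero]
      · have hc : ¬ (b ≤ k.val ∧ k.val ≤ a) := by omega
        rw [if_neg h1, if_neg hc, zero_mul]
    rw [Finset.sum_congr rfl (fun k _ => hterm k)]
    rw [Fin.sum_univ_eq_sum_range
      (fun k => if b ≤ k ∧ k ≤ a then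
        ((-1 : R) ^ a * m ^ (a - b)) *
          ((-1 : R) ^ k * (a.choose k : R) * (k.choose b : R)) else 0)]
    rw [← Finset.sum_filter]
    have hset : (Finset.range n).filter (fun k => b ≤ k ∧ k ≤ a) = Finset.Icc b a := by
      ext k
      simp only [Finset.mem_filter, Finset.mem_range, Finset.mem_Icc]
      omega
    rw [hset, ← Finset.mul_sum, alt_sum_key]
    rw [Matrix.one_apply]
    by_cases hij : i = j
    · subst hij
      have hab : a = b := by omega
      rw [if_pos hab, if_pos rfl, hab]
      rw [Nat.sub_self, pow_zero, mul_one, ← pow_add, ← two_mul, pow_mul]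
      norm_num
    · have hv : i.val ≠ j.val := fun h => hij (Fin.ext h)
      have hab : ¬ a = b := by omega
      rw [if_neg hab, if_neg hij, mul_zero]
  exact ⟨hST, mul_eq_one_comm.mp hST⟩
end

section
/- Let m be an integer and p a prime such that p divides x² − m·x − 1 for some integer x, and gcd(p, m² + 4) = 1. Then for every n ≥ 1: T_n(m)^{p-1} ≡ I_n (mod p). -/
open Polynomial Matrix

/-- Symmetric-power style matrix attached to a `2×2` matrix. -/
noncomputable def smatAux {R : Type*} [CommRing R] (n : ℕ)
    (A : Matrix (Fin 2) (Fin 2) R) : Matrix (Fin n) (Fin n) R :=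
  Matrix.of fun i j =>
    ((C (A 0 0) * X + C (A 0 1)) ^ (n - 1 - i.val) *
      (C (A 1 0) * X + C (A 1 1)) ^ i.val).coeff (n - 1 - j.val)

lemma reflect_sum_range {R : Type*} [CommRing R] (N k : ℕ) (f : ℕ → R) :
    (∑ t ∈ Finset.range k, C (f t) * X ^ t).reflect N
      = ∑ t ∈ Finset.range k, C (f t) * X ^ (Polynomial.revAt N t) := by
  induction k with
  | zero => simp
  | succ k ih =>
      rw [Finset.sum_range_succ, Finset.sum_range_succ, reflect_add, ih,
        reflect_C_mul_X_pow]

lemma reflect_linear_pow {R : Type*} [CommRing R] (a b : R) (k : ℕ) :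
    ((C a * X + C b) ^ k).reflect k = (C b * X + C a) ^ k := by
  induction k with
  | zero =>
      rw [pow_zero, pow_zero]
      rw [show (1 : R[X]) = C 1 * X ^ 0 by simp, reflect_C_mul_X_pow]
      simp
  | succ k ih =>
      have h1 : ((C a * X + C b) ^ k).natDegree ≤ k := by
        refine le_trans natDegree_pow_le ?_
        calc k * (C a * X + C b).natDegree ≤ k * 1 :=
              Nat.mul_le_mul_left k natDegree_linear_le
          _ = k := by omega
      have h2 : (C a * X + C b).natDegree ≤ 1 := natDegree_linear_le
      have := reflect_mul ((C a * X + C b) ^ k) (C a * X + C b) h1 h2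
      rw [← pow_succ] at this
      rw [this, ih]
      have hlin : (C a * X + C b).reflect 1 = C b * X + C a := by
        rw [show C a * X + C b = C a * X ^ 1 + C b * X ^ 0 by simp,
          reflect_add, reflect_C_mul_X_pow, reflect_C_mul_X_pow]
        simp [Polynomial.revAt_le]
        ring
      rw [hlin, ← pow_succ]

/-- The key polynomial identity behind multiplicativity of `smatAux` by `T₂`. -/
lemma smat_key {R : Type*} [CommRing R] (a b c d m : R) (N i : ℕ) (hi : i ≤ N) :
    (C b * X + C (a + b * m)) ^ (N - i) * (C d * X + C (c + d * m)) ^ i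
      = ∑ t ∈ Finset.range (N + 1),
          C (((C a * X + C b) ^ (N - i) * (C c * X + C d) ^ i).coeff t)
            * (X + C m) ^ (N - t) := by
  set g : R[X] := (C a * X + C b) ^ (N - i) * (C c * X + C d) ^ i with hg
  have hdeg1 : ((C a * X + C b) ^ (N - i)).natDegree ≤ N - i := by
    refine le_trans natDegree_pow_le ?_
    calc (N - i) * (C a * X + C b).natDegree ≤ (N - i) * 1 :=
          Nat.mul_le_mul_left _ natDegree_linear_le
      _ = N - i := by omega
  have hdeg2 : ((C c * X + C d) ^ i).natDegree ≤ i := by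
    refine le_trans natDegree_pow_le ?_
    calc i * (C c * X + C d).natDegree ≤ i * 1 :=
          Nat.mul_le_mul_left _ natDegree_linear_le
      _ = i := by omega
  have hdeg : g.natDegree ≤ N := by
    refine le_trans natDegree_mul_le ?_
    omega
  have hrefl : g.reflect N = (C b * X + C a) ^ (N - i) * (C d * X + C c) ^ i := by
    have := reflect_mul ((C a * X + C b) ^ (N - i)) ((C c * X + C d) ^ i) hdeg1 hdeg2
    rw [show N - i + i = N by omega] at this
    rw [hg, this, reflect_linear_pow, reflect_linear_pow]
  have hsum : g = ∑ t ∈ Finset.range (N + 1), C (g.coeff t) * X ^ t := by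
    conv_lhs => rw [g.as_sum_range' (N + 1) (Nat.lt_succ_of_le hdeg)]
    simp_rw [← C_mul_X_pow_eq_monomial]
  have hrefl2 : g.reflect N = ∑ t ∈ Finset.range (N + 1), C (g.coeff t) * X ^ (N - t) := by
    conv_lhs => rw [hsum, reflect_sum_range]
    refine Finset.sum_congr rfl fun t ht => ?_
    rw [Polynomial.revAt_le (by simpa using Nat.lt_succ_iff.mp (Finset.mem_range.mp ht))]
  have lhs_eq : (C b * X + C (a + b * m)) ^ (N - i) * (C d * X + C (c + d * m)) ^ i
      = (g.reflect N).comp (X + C m) := by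
    rw [hrefl, mul_comp, pow_comp, pow_comp, add_comp, add_comp, mul_comp, mul_comp,
      C_comp, C_comp, C_comp, C_comp, X_comp]
    ring_nf
    simp only [C_add, C_mul]
    ring
  rw [lhs_eq, hrefl2, sum_comp]
  refine Finset.sum_congr rfl fun t ht => ?_
  rw [mul_comp, pow_comp, C_comp, X_comp]

/-- The `2×2` companion matrix of `x² - m x - 1`. -/
def tTwo {R : Type*} [CommRing R] (m : R) : Matrix (Fin 2) (Fin 2) R :=
  !![0, 1; 1, m]

lemma smatAux_one {R : Type*} [CommRing R] (n : ℕ) :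
    smatAux (R := R) n 1 = 1 := by
  ext i j
  simp only [smatAux, Matrix.of_apply]
  have h00 : (1 : Matrix (Fin 2) (Fin 2) R) 0 0 = 1 := rfl
  have h01 : (1 : Matrix (Fin 2) (Fin 2) R) 0 1 = 0 := rfl
  have h10 : (1 : Matrix (Fin 2) (Fin 2) R) 1 0 = 0 := rfl
  have h11 : (1 : Matrix (Fin 2) (Fin 2) R) 1 1 = 1 := rfl
  rw [h00, h01, h10, h11]
  simp only [Polynomial.C_1, Polynomial.C_0, one_mul, zero_mul, add_zero, zero_add,
    one_pow, mul_one]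
  rw [coeff_X_pow]
  rw [Matrix.one_apply]
  have hi := i.isLt
  have hj := j.isLt
  by_cases h : i = j
  · subst h; simp
  · have : ¬ (n - 1 - j.val = n - 1 - i.val) := by
      intro hc
      exact h (Fin.ext (by omega))
    simp [h, this]

lemma smatAux_mul_tTwo {R : Type*} [CommRing R] (m : R) (n : ℕ)
    (A : Matrix (Fin 2) (Fin 2) R) :
    smatAux n (A * tTwo m) = smatAux n A * smatAux n (tTwo m) := by
  ext i j
  have hA00 : (A * tTwo m) 0 0 = A 0 1 := by
    simp [Matrix.mul_apply, tTwo, Fin.sum_univ_two]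
  have hA01 : (A * tTwo m) 0 1 = A 0 0 + A 0 1 * m := by
    simp [Matrix.mul_apply, tTwo, Fin.sum_univ_two]
  have hA10 : (A * tTwo m) 1 0 = A 1 1 := by
    simp [Matrix.mul_apply, tTwo, Fin.sum_univ_two]
  have hA11 : (A * tTwo m) 1 1 = A 1 0 + A 1 1 * m := by
    simp [Matrix.mul_apply, tTwo, Fin.sum_univ_two]
  have hi : i.val ≤ n - 1 := by have := i.isLt; omega
  set g : R[X] := (C (A 0 0) * X + C (A 0 1)) ^ (n - 1 - i.val)
      * (C (A 1 0) * X + C (A 1 1)) ^ i.val with hg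
  have lhs_eq : smatAux n (A * tTwo m) i j
      = (∑ t ∈ Finset.range (n - 1 + 1),
          C (g.coeff t) * (X + C m) ^ (n - 1 - t)).coeff (n - 1 - j.val) := by
    simp only [smatAux, Matrix.of_apply, hA00, hA01, hA10, hA11]
    rw [smat_key (A 0 0) (A 0 1) (A 1 0) (A 1 1) m (n - 1) i.val hi]
  rw [lhs_eq]
  rw [Matrix.mul_apply]
  have rhs_eq : ∀ k : Fin n, smatAux n A i k * smatAux n (tTwo m) k j
      = g.coeff (n - 1 - k.val) * ((X + C m) ^ k.val).coeff (n - 1 - j.val) := by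
    intro k
    simp only [smatAux, Matrix.of_apply, tTwo]
    congr 1
    norm_num [Matrix.cons_val_zero, Matrix.cons_val_one]
  simp_rw [rhs_eq]
  rw [finset_sum_coeff]
  simp_rw [coeff_C_mul]
  have hn1 : n - 1 + 1 = n := by
    rcases Nat.eq_zero_or_pos n with h | h
    · subst h
      exfalso; exact absurd i.isLt (by simp)
    · omega
  rw [hn1]
  calc ∑ t ∈ Finset.range n, g.coeff t * ((X + C m) ^ (n - 1 - t)).coeff (n - 1 - j.val)
      = ∑ t ∈ Finset.range n,
          (fun s => g.coeff (n - 1 - s) * ((X + C m) ^ s).coeff (n - 1 - j.val))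
            (n - 1 - t) := by
        refine Finset.sum_congr rfl fun t ht => ?_
        have ht' := Finset.mem_range.mp ht
        simp only
        rw [show n - 1 - (n - 1 - t) = t by omega]
    _ = ∑ t ∈ Finset.range n,
          (fun s => g.coeff (n - 1 - s) * ((X + C m) ^ s).coeff (n - 1 - j.val)) t :=
      by
        exact Finset.sum_range_reflect
          (fun s => g.coeff (n - 1 - s) * ((X + C m) ^ s).coeff (n - 1 - j.val)) n
    _ = ∑ k : Fin n, g.coeff (n - 1 - k.val) * ((X + C m) ^ k.val).coeff (n - 1 - j.val) :=
        (Fin.sum_univ_eq_sum_range _ n).symm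

lemma smatAux_pow {R : Type*} [CommRing R] (m : R) (n : ℕ) (e : ℕ) :
    smatAux n (tTwo m ^ e) = (smatAux n (tTwo m)) ^ e := by
  induction e with
  | zero => simpa using smatAux_one (R := R) n
  | succ e ih =>
      rw [pow_succ, pow_succ, smatAux_mul_tTwo, ih]

lemma genFibMatrix_eq_smatAux {R : Type*} [CommRing R] (m : R) (n : ℕ) :
    genFibMatrix m n = smatAux n (tTwo m) := by
  ext i j
  have hi := i.isLt
  have hj := j.isLt
  simp only [genFibMatrix, smatAux, Matrix.of_apply, tTwo,
    Matrix.cons_val', Matrix.cons_val_zero, Matrix.cons_val_one, Matrix.head_cons,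
    Matrix.head_fin_const, Matrix.cons_val_fin_one, Matrix.empty_val',
    Polynomial.C_0, Polynomial.C_1, zero_mul, zero_add, one_mul, one_pow]
  rw [coeff_X_add_C_pow]
  by_cases h : n ≤ i.val + j.val + 1
  · rw [if_pos h, show i.val - (n - 1 - j.val) = i.val + j.val + 1 - n by omega,
      mul_comm]
  · rw [if_neg h]
    have : i.val < n - 1 - j.val := by omega
    rw [Nat.choose_eq_zero_of_lt this]
    simp

/-- If the prime `p` divides `x² - m x - 1` for some integer `x`, and
`gcd(p, m² + 4) = 1`, then `T_n(m)^{p-1} ≡ I_n (mod p)` for every `n ≥ 1`. -/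
theorem genFibMatrix_pow_p_sub_one (m : ℤ) (p : ℕ) (hp : p.Prime)
    (hroot : ∃ x : ℤ, (p : ℤ) ∣ x ^ 2 - m * x - 1)
    (hcop : Int.gcd (p : ℤ) (m ^ 2 + 4) = 1) :
    ∀ n : ℕ, 1 ≤ n →
      (((genFibMatrix m n) ^ (p - 1)).map (Int.cast : ℤ → ZMod p)) = 1 := by
  intro n hn
  haveI : Fact p.Prime := ⟨hp⟩
  set m' : ZMod p := (m : ZMod p) with hm'
  -- the root α and its conjugate β
  obtain ⟨x, hx⟩ := hroot
  set α : ZMod p := ((x : ℤ) : ZMod p) with hα'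
  have hα : α ^ 2 = m' * α + 1 := by
    have h0 : ((x ^ 2 - m * x - 1 : ℤ) : ZMod p) = 0 :=
      (ZMod.intCast_zmod_eq_zero_iff_dvd _ p).mpr hx
    push_cast at h0
    linear_combination h0
  set β : ZMod p := m' - α with hβ'
  have hβ : β ^ 2 = m' * β + 1 := by
    rw [hβ']; linear_combination hα
  -- discriminant is nonzero
  have hΔ : m' ^ 2 + 4 ≠ 0 := by
    intro hc
    have hdvd : (p : ℤ) ∣ m ^ 2 + 4 := by
      rw [← ZMod.intCast_zmod_eq_zero_iff_dvd]
      push_cast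
      exact hc
    have h1 : (p : ℤ) ∣ (1 : ℤ) := by
      have := Int.dvd_gcd (dvd_refl (p : ℤ)) hdvd
      rw [hcop] at this
      exact_mod_cast this
    have := Int.le_of_dvd one_pos h1
    have h2 := hp.two_le
    omega
  have hαβ : β - α ≠ 0 := by
    intro hc
    apply hΔ
    have h2 : (β - α) ^ 2 = m' ^ 2 + 4 := by
      rw [hβ']; linear_combination 4 * hα
    rw [hc] at h2
    simpa using h2.symm
  have hα0 : α ≠ 0 := fun hc => by simp [hc] at hα
  have hβ0 : β ≠ 0 := fun hc => by simp [hc] at hβ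
  -- diagonalization of T₂
  set V : Matrix (Fin 2) (Fin 2) (ZMod p) := !![1, 1; α, β] with hV
  set D : Matrix (Fin 2) (Fin 2) (ZMod p) := Matrix.diagonal ![α, β] with hD
  have hdetV : IsUnit V.det := by
    rw [hV, Matrix.det_fin_two_of]
    rw [isUnit_iff_ne_zero]
    intro hc
    apply hαβ
    linear_combination hc
  have hTV : tTwo m' * V = V * D := by
    ext i j
    fin_cases i <;> fin_cases j <;>
      simp [tTwo, hV, hD, Matrix.mul_apply, Fin.sum_univ_two, Matrix.diagonal]
    · linear_combination -hα
    · linear_combination -hα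
  have hTVpow : ∀ e : ℕ, tTwo m' ^ e * V = V * D ^ e := by
    intro e
    induction e with
    | zero => simp
    | succ e ih =>
        rw [pow_succ', pow_succ']
        rw [Matrix.mul_assoc, ih, ← Matrix.mul_assoc, hTV, Matrix.mul_assoc]
  have hDpow : D ^ (p - 1) = 1 := by
    have hv : (![α, β]) ^ (p - 1) = 1 := by
      funext i
      fin_cases i <;>
        simp [Pi.pow_apply, ZMod.pow_card_sub_one_eq_one hα0,
          ZMod.pow_card_sub_one_eq_one hβ0]
    rw [hD, Matrix.diagonal_pow, hv]
    exact Matrix.diagonal_one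
  have hT2 : tTwo m' ^ (p - 1) = 1 := by
    have h1 : tTwo m' ^ (p - 1) * V = V := by rw [hTVpow, hDpow, Matrix.mul_one]
    calc tTwo m' ^ (p - 1)
        = tTwo m' ^ (p - 1) * (V * V⁻¹) := by rw [Matrix.mul_nonsing_inv V hdetV, Matrix.mul_one]
      _ = (tTwo m' ^ (p - 1) * V) * V⁻¹ := by rw [Matrix.mul_assoc]
      _ = V * V⁻¹ := by rw [h1]
      _ = 1 := Matrix.mul_nonsing_inv V hdetV
  -- transfer to the n × n matrix
  have hmap : (genFibMatrix m n).map (Int.cast : ℤ → ZMod p) = genFibMatrix m' n := by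
    ext i j
    simp only [genFibMatrix, Matrix.map_apply, Matrix.of_apply]
    split <;> push_cast <;> simp [hm']
  have hmappow : ((genFibMatrix m n) ^ (p - 1)).map (Int.cast : ℤ → ZMod p)
      = ((genFibMatrix m n).map (Int.cast : ℤ → ZMod p)) ^ (p - 1) := by
    have : (genFibMatrix m n).map (Int.cast : ℤ → ZMod p)
        = (Int.castRingHom (ZMod p)).mapMatrix (genFibMatrix m n) := rfl
    rw [this, ← map_pow]
    rfl
  rw [hmappow, hmap, genFibMatrix_eq_smatAux, ← smatAux_pow, hT2, smatAux_one]
end
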